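/- arXiv:0905.4378 — 7 statements merged into one kernel-verified Lean document; each statement's English description precedes it below -/
import Mathlib

section
/- Let H be an m × p real matrix, let s ≥ 1, let S be a set of column indices with |S| = s such that the Gram matrix G = H_Sᵀ H_S is invertible, and let U be the p × s matrix whose columns are the standard basis vectors e_i of ℝ^p for i ∈ S. Let α̂ : ℝ^m → ℝ^p be a measurable estimator such that ∫ ‖α̂(Hα₀ + w)‖² dν(w) < ∞, and suppose α̂ is unbiased on the support subspace, i.e., for every α ∈ ℝ^p with supp(α) ⊆ S one has ∫ α̂(Hα + w) dν(w) = α. Then for every α₀ with supp(α₀) ⊆ S, the covariance-type matrix C of α̂ at α₀ satisfies C ⪰ σ² · U G⁻¹ Uᵀ. -/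
/-!
Hammersley–Chapman–Robbins argument. Fix `x` and put `u = U G⁻¹ Uᵀ x`: it is supported in `S`
and `‖H u‖² = xᵀ u`. Shifting the noise by `t • H u` turns unbiasedness at `α₀ + t • u` into
`E[g L_t] = t xᵀu`, where `g = xᵀ(α̂ - α₀)` and `L_t` is the Gaussian likelihood ratio of the shift,
with `E L_t = 1` and `E L_t² = exp (t² ‖H u‖² / σ²)`. Cauchy–Schwarz for `g` and `L_t - 1` gives
`t² (xᵀu)² ≤ xᵀ C x · (exp (t² xᵀu / σ²) - 1)`, and letting `t → 0` yields `σ² xᵀu ≤ xᵀ C x`.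
-/

open MeasureTheory ProbabilityTheory Matrix Real Filter Topology
open scoped ENNReal NNReal

theorem MeasureTheory.lintegral_pi_prod_eq_prod {ι : Type*} [Fintype ι] {X : ι → Type*}
    [∀ i, MeasurableSpace (X i)] (μ : ∀ i, Measure (X i)) [∀ i, IsProbabilityMeasure (μ i)]
    {f : ∀ i, X i → ℝ≥0∞} (hf : ∀ i, Measurable (f i)) :
    ∫⁻ x, ∏ i, f i (x i) ∂Measure.pi μ = ∏ i, ∫⁻ y, f i y ∂μ i :=
  (lintegral_prod_eq_prod_lintegral_of_indepFun Finset.univ (fun i (x : ∀ j, X j) => f i (x i))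
    (iIndepFun_pi fun i => (hf i).aemeasurable) fun i => (hf i).comp (measurable_pi_apply i)).trans
    (Finset.prod_congr rfl fun i _ => (measurePreserving_eval μ i).lintegral_comp (hf i))

theorem MeasureTheory.Measure.pi_withDensity {ι : Type*} [Fintype ι] {X : ι → Type*}
    [∀ i, MeasurableSpace (X i)] (μ : ∀ i, Measure (X i)) [∀ i, IsProbabilityMeasure (μ i)]
    {f : ∀ i, X i → ℝ≥0∞} (hf : ∀ i, Measurable (f i))
    [∀ i, SigmaFinite ((μ i).withDensity (f i))] :
    Measure.pi (fun i => (μ i).withDensity (f i)) =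
      (Measure.pi μ).withDensity fun x => ∏ i, f i (x i) := by
  refine Measure.pi_eq fun s hs => ?_
  have hbox : (Set.univ.pi s).indicator (fun x => ∏ i, f i (x i)) =
      fun x => ∏ i, (s i).indicator (f i) (x i) := by
    funext x
    classical
    simp [Set.indicator_apply, Finset.prod_ite_zero]
  rw [withDensity_apply _ (MeasurableSet.univ_pi hs),
    ← lintegral_indicator (MeasurableSet.univ_pi hs), hbox,
    lintegral_pi_prod_eq_prod μ fun i => (hf i).indicator (hs i)]
  exact Finset.prod_congr rfl fun i _ => by
    rw [lintegral_indicator (hs i), withDensity_apply _ (hs i)]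

section Moments

variable {α : Type*} [MeasurableSpace α] {μ : Measure α} {f g : α → ℝ}

lemma sq_integral_mul_le (hf : MemLp f 2 μ) (hg : MemLp g 2 μ) :
    (∫ x, f x * g x ∂μ) ^ 2 ≤ (∫ x, f x ^ 2 ∂μ) * ∫ x, g x ^ 2 ∂μ := by
  have hquad : ∀ l : ℝ, 0 ≤ (∫ x, g x ^ 2 ∂μ) * (l * l) + 2 * (∫ x, f x * g x ∂μ) * l +
      ∫ x, f x ^ 2 ∂μ := fun l => by
    have hsq : ∀ x, (l * g x + f x) ^ 2 = l * l * g x ^ 2 + 2 * l * (f x * g x) + f x ^ 2 :=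
      fun x => by ring
    have hg2 : Integrable (fun x => l * l * g x ^ 2) μ := hg.integrable_sq.const_mul _
    have hfg : Integrable (fun x => 2 * l * (f x * g x)) μ :=
      (hf.integrable_mul hg).const_mul _
    calc 0 ≤ ∫ x, (l * g x + f x) ^ 2 ∂μ := integral_nonneg fun x => sq_nonneg _
      _ = _ := by
        simp_rw [hsq]
        rw [integral_add (hg2.fun_add hfg) hf.integrable_sq, integral_add hg2 hfg,
          integral_const_mul, integral_const_mul]
        ring
  have := discrim_le_zero hquad
  rw [discrim] at this
  linarith

lemma sq_integral_mul_le_of_integral_eq [IsProbabilityMeasure μ] {L : α → ℝ}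
    (hg : MemLp g 2 μ) (hL : MemLp L 2 μ) (hg0 : ∫ x, g x ∂μ = 0) (hL1 : ∫ x, L x ∂μ = 1) :
    (∫ x, g x * L x ∂μ) ^ 2 ≤ (∫ x, g x ^ 2 ∂μ) * (∫ x, L x ^ 2 ∂μ - 1) := by
  have hL1' : MemLp (fun x => L x - 1) 2 μ := hL.sub (memLp_const 1)
  have hcov : ∫ x, g x * L x ∂μ = ∫ x, g x * (L x - 1) ∂μ := by
    simp_rw [mul_sub, mul_one]
    have hgL : Integrable (fun x => g x * L x) μ := hg.integrable_mul hL
    rw [integral_sub hgL (hg.integrable (by norm_num)), hg0, sub_zero]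
  have hvar : ∫ x, (L x - 1) ^ 2 ∂μ = ∫ x, L x ^ 2 ∂μ - 1 := by
    have hL2 : Integrable (fun x => 2 * L x) μ := (hL.integrable (by norm_num)).const_mul 2
    have hL2' : Integrable (fun x => L x ^ 2 - 2 * L x) μ := hL.integrable_sq.sub hL2
    simp_rw [sub_sq, mul_one, one_pow]
    rw [integral_add hL2' (integrable_const 1),
      integral_sub hL.integrable_sq hL2, integral_const_mul, hL1, integral_const, probReal_univ,
      one_smul]
    ring
  exact hcov ▸ hvar ▸ sq_integral_mul_le hg hL1'

lemma memLp_two_of_integrable_sum_sq {κ : Type*} [Fintype κ] {F : α → κ → ℝ}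
    (hF : AEStronglyMeasurable F μ) (h : Integrable (fun x => ∑ i, F x i ^ 2) μ) :
    MemLp F 2 μ :=
  memLp_pi_iff.2 fun i => by
    have hFi : AEStronglyMeasurable (fun x => F x i) μ :=
      (continuous_apply i).comp_aestronglyMeasurable hF
    refine (memLp_two_iff_integrable_sq hFi).2 (h.mono' (hFi.pow 2) (ae_of_all _ fun x => ?_))
    rw [Real.norm_of_nonneg (sq_nonneg _)]
    exact Finset.single_le_sum (fun j _ => sq_nonneg (F x j)) (Finset.mem_univ i)

noncomputable def secondMomentMatrix {κ : Type*} (μ : Measure α) (F : α → κ → ℝ) : Matrix κ κ ℝ :=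
  of fun i j => ∫ x, F x i * F x j ∂μ

lemma secondMomentMatrix_transpose {κ : Type*} (μ : Measure α) (F : α → κ → ℝ) :
    (secondMomentMatrix μ F)ᵀ = secondMomentMatrix μ F := by
  ext i j
  simp only [secondMomentMatrix, transpose_apply, of_apply, mul_comm]

lemma dotProduct_secondMomentMatrix_mulVec {κ : Type*} [Fintype κ] {F : α → κ → ℝ}
    (hF : MemLp F 2 μ) (v : κ → ℝ) :
    v ⬝ᵥ secondMomentMatrix μ F *ᵥ v = ∫ x, (v ⬝ᵥ F x) ^ 2 ∂μ := by
  have hprod : ∀ i j, Integrable (fun x => v i * v j * (F x i * F x j)) μ := fun i j =>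
    ((hF.eval i).integrable_mul (hF.eval j)).const_mul _
  calc v ⬝ᵥ secondMomentMatrix μ F *ᵥ v = ∑ i, ∑ j, ∫ x, v i * v j * (F x i * F x j) ∂μ := by
        simp only [secondMomentMatrix, dotProduct, mulVec, of_apply, integral_const_mul,
          Finset.mul_sum]
        exact Finset.sum_congr rfl fun i _ => Finset.sum_congr rfl fun j _ => by ring
    _ = ∫ x, ∑ i, ∑ j, v i * v j * (F x i * F x j) ∂μ := by
        rw [integral_finsetSum _ fun i _ => integrable_finsetSum _ fun j _ => hprod i j]
        exact Finset.sum_congr rfl fun i _ => (integral_finsetSum _ fun j _ => hprod i j).symm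
    _ = ∫ x, (v ⬝ᵥ F x) ^ 2 ∂μ := by
        congr 1 with x
        rw [sq, dotProduct, Finset.sum_mul_sum]
        exact Finset.sum_congr rfl fun i _ => Finset.sum_congr rfl fun j _ => by ring

lemma integral_dotProduct {κ : Type*} [Fintype κ] {F : α → κ → ℝ} (hF : Integrable F μ)
    (v : κ → ℝ) : ∫ x, v ⬝ᵥ F x ∂μ = v ⬝ᵥ ∫ x, F x ∂μ := by
  simp only [dotProduct]
  rw [integral_finsetSum _ fun i _ => (hF.eval i).const_mul (v i)]
  exact Finset.sum_congr rfl fun i _ => by rw [integral_const_mul, eval_integral hF.eval]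

end Moments

lemma sq_le_mul_of_forall_sq_mul_le {k R a : ℝ} (hR : 0 ≤ R)
    (h : ∀ t : ℝ, (t * k) ^ 2 ≤ R * (exp (t ^ 2 * a) - 1)) : k ^ 2 ≤ R * a := by
  have hbound : ∀ t : ℝ, t ≠ 0 → k ^ 2 ≤ R * a * exp (t ^ 2 * a) := fun t ht => by
    have hexp : exp (t ^ 2 * a) - 1 ≤ t ^ 2 * a * exp (t ^ 2 * a) := by
      have := mul_le_mul_of_nonneg_right (add_one_le_exp (-(t ^ 2 * a))) (exp_pos (t ^ 2 * a)).le
      rw [← exp_add, neg_add_cancel, exp_zero] at this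
      linarith
    have ht2 : 0 < t ^ 2 := by positivity
    have := (h t).trans (mul_le_mul_of_nonneg_left hexp hR)
    nlinarith
  have hlim : Tendsto (fun t : ℝ => R * a * exp (t ^ 2 * a)) (𝓝[≠] 0) (𝓝 (R * a)) := by
    have : Continuous fun t : ℝ => R * a * exp (t ^ 2 * a) := by fun_prop
    simpa using (this.tendsto 0).mono_left nhdsWithin_le_nhds
  exact ge_of_tendsto hlim (eventually_nhdsWithin_of_forall hbound)

noncomputable section GaussianShift

variable (V : ℝ≥0) {ι : Type*} [Fintype ι]

def gaussianShiftRatio (a x : ℝ) : ℝ := exp ((a * x - a ^ 2 / 2) / V)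

lemma measurable_gaussianShiftRatio (a : ℝ) : Measurable (gaussianShiftRatio V a) := by
  unfold gaussianShiftRatio; fun_prop

lemma gaussianReal_eq_withDensity_gaussianShiftRatio (hV : V ≠ 0) (a : ℝ) :
    gaussianReal a V =
      (gaussianReal 0 V).withDensity fun x => ENNReal.ofReal (gaussianShiftRatio V a x) := by
  rw [gaussianReal_of_var_ne_zero _ hV, gaussianReal_of_var_ne_zero _ hV,
    ← withDensity_mul _ (measurable_gaussianPDF 0 V)
      (measurable_gaussianShiftRatio V a).ennreal_ofReal]
  congr 1
  ext x
  rw [Pi.mul_apply, gaussianPDF, gaussianPDF, ← ENNReal.ofReal_mul (gaussianPDFReal_nonneg 0 V x)]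
  congr 1
  simp only [gaussianPDFReal, gaussianShiftRatio, mul_assoc, ← exp_add]
  congr 2
  field_simp
  ring

def gaussianShiftRatioPi (c w : ι → ℝ) : ℝ := ∏ i, gaussianShiftRatio V (c i) (w i)

lemma measurable_gaussianShiftRatioPi (c : ι → ℝ) : Measurable (gaussianShiftRatioPi V c) :=
  Finset.measurable_prod _ fun i _ =>
    (measurable_gaussianShiftRatio V (c i)).comp (measurable_pi_apply i)

lemma gaussianShiftRatioPi_nonneg (c w : ι → ℝ) : 0 ≤ gaussianShiftRatioPi V c w :=
  Finset.prod_nonneg fun _ _ => (exp_pos _).le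

local notation "𝒩" => Measure.pi fun _ : ι => gaussianReal 0 V

lemma map_add_pi_gaussianReal (hV : V ≠ 0) (c : ι → ℝ) :
    (𝒩).map (· + c) = (𝒩).withDensity fun w => ENNReal.ofReal (gaussianShiftRatioPi V c w) := by
  have hshift : ∀ i, (gaussianReal 0 V).map (· + c i) =
      (gaussianReal 0 V).withDensity fun x => ENNReal.ofReal (gaussianShiftRatio V (c i) x) := by
    intro i
    rw [gaussianReal_map_add_const, zero_add, gaussianReal_eq_withDensity_gaussianShiftRatio V hV]
  have : ∀ i, SigmaFinite ((gaussianReal 0 V).withDensity fun x =>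
      ENNReal.ofReal (gaussianShiftRatio V (c i) x)) := fun i => hshift i ▸ inferInstance
  rw [show (· + c) = fun (w : ι → ℝ) i => w i + c i from rfl,
    Measure.pi_map_pi fun i => (measurable_add_const (c i)).aemeasurable]
  simp_rw [hshift]
  rw [Measure.pi_withDensity _ fun i => (measurable_gaussianShiftRatio V (c i)).ennreal_ofReal]
  congr 1
  ext w
  exact (ENNReal.ofReal_prod_of_nonneg fun i _ => (exp_pos _).le).symm

lemma lintegral_gaussianShiftRatioPi (hV : V ≠ 0) (c : ι → ℝ) :
    ∫⁻ w, ENNReal.ofReal (gaussianShiftRatioPi V c w) ∂𝒩 = 1 := by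
  rw [← setLIntegral_univ, ← withDensity_apply _ MeasurableSet.univ,
    ← map_add_pi_gaussianReal V hV c, Measure.map_apply (measurable_add_const c) MeasurableSet.univ,
    Set.preimage_univ, measure_univ]

lemma integrable_gaussianShiftRatioPi (hV : V ≠ 0) (c : ι → ℝ) :
    Integrable (gaussianShiftRatioPi V c) 𝒩 := by
  refine ⟨(measurable_gaussianShiftRatioPi V c).aestronglyMeasurable, ?_⟩
  rw [hasFiniteIntegral_iff_ofReal (ae_of_all _ (gaussianShiftRatioPi_nonneg V c)),
    lintegral_gaussianShiftRatioPi V hV c]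
  exact ENNReal.one_lt_top

lemma integral_gaussianShiftRatioPi (hV : V ≠ 0) (c : ι → ℝ) :
    ∫ w, gaussianShiftRatioPi V c w ∂𝒩 = 1 := by
  rw [integral_eq_lintegral_of_nonneg_ae (ae_of_all _ (gaussianShiftRatioPi_nonneg V c))
    (measurable_gaussianShiftRatioPi V c).aestronglyMeasurable,
    lintegral_gaussianShiftRatioPi V hV c, ENNReal.toReal_one]

lemma gaussianShiftRatioPi_sq (hV : V ≠ 0) (c w : ι → ℝ) :
    gaussianShiftRatioPi V c w ^ 2 =
      exp ((∑ i, c i ^ 2) / V) * gaussianShiftRatioPi V (2 • c) w := by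
  simp only [gaussianShiftRatioPi, gaussianShiftRatio, ← Finset.prod_pow, Finset.sum_div,
    exp_sum, ← Finset.prod_mul_distrib, ← exp_nat_mul, ← exp_add, Pi.smul_apply]
  refine Finset.prod_congr rfl fun i _ => congrArg exp ?_
  field_simp
  ring

lemma memLp_two_gaussianShiftRatioPi (hV : V ≠ 0) (c : ι → ℝ) :
    MemLp (gaussianShiftRatioPi V c) 2 𝒩 := by
  refine (memLp_two_iff_integrable_sq
    (measurable_gaussianShiftRatioPi V c).aestronglyMeasurable).2 ?_
  simp_rw [gaussianShiftRatioPi_sq V hV]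
  exact (integrable_gaussianShiftRatioPi V hV _).const_mul _

lemma integral_gaussianShiftRatioPi_sq (hV : V ≠ 0) (c : ι → ℝ) :
    ∫ w, gaussianShiftRatioPi V c w ^ 2 ∂𝒩 = exp ((∑ i, c i ^ 2) / V) := by
  simp_rw [gaussianShiftRatioPi_sq V hV]
  rw [integral_const_mul, integral_gaussianShiftRatioPi V hV, mul_one]

variable {E : Type*} [NormedAddCommGroup E] [NormedSpace ℝ E]

lemma integrable_comp_add_of_memLp_two (hV : V ≠ 0) {f : (ι → ℝ) → E} (hf : MemLp f 2 𝒩)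
    (c : ι → ℝ) : Integrable (fun w => f (w + c)) 𝒩 := by
  refine (measurableEmbedding_addRight c).integrable_map_iff.1 ?_
  rw [map_add_pi_gaussianReal V hV c,
    integrable_withDensity_iff_integrable_smul'
      (measurable_gaussianShiftRatioPi V c).ennreal_ofReal
      (ae_of_all _ fun _ => ENNReal.ofReal_lt_top)]
  simp_rw [ENNReal.toReal_ofReal (gaussianShiftRatioPi_nonneg V c _)]
  exact memLp_one_iff_integrable.1 (hf.smul (memLp_two_gaussianShiftRatioPi V hV c))

lemma integral_comp_add (hV : V ≠ 0) (f : (ι → ℝ) → E) (c : ι → ℝ) :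
    ∫ w, f (w + c) ∂𝒩 = ∫ w, gaussianShiftRatioPi V c w • f w ∂𝒩 := by
  rw [← (measurableEmbedding_addRight c).integral_map, map_add_pi_gaussianReal V hV c,
    integral_withDensity_eq_integral_toReal_smul
      (measurable_gaussianShiftRatioPi V c).ennreal_ofReal
      (ae_of_all _ fun _ => ENNReal.ofReal_lt_top)]
  simp_rw [ENNReal.toReal_ofReal (gaussianShiftRatioPi_nonneg V c _)]

theorem pi_gaussianReal_cramerRao (hV : V ≠ 0) {f : (ι → ℝ) → ℝ} (hf : MemLp f 2 𝒩)
    (b : ι → ℝ) (k : ℝ) (hshift : ∀ t : ℝ, ∫ w, f (w + t • b) ∂𝒩 = t * k) :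
    V * k ^ 2 ≤ (b ⬝ᵥ b) * ∫ w, f w ^ 2 ∂𝒩 := by
  have hmean : ∫ w, f w ∂𝒩 = 0 := by simpa using hshift 0
  have hbound : k ^ 2 ≤ (∫ w, f w ^ 2 ∂𝒩) * (b ⬝ᵥ b / V) := by
    refine sq_le_mul_of_forall_sq_mul_le (integral_nonneg fun _ => sq_nonneg _) fun t => ?_
    have hfL : ∫ w, f w * gaussianShiftRatioPi V (t • b) w ∂𝒩 = t * k := by
      rw [← hshift t, integral_comp_add V hV]
      simp_rw [smul_eq_mul, mul_comm]
    have hL2 : ∫ w, gaussianShiftRatioPi V (t • b) w ^ 2 ∂𝒩 =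
        exp (t ^ 2 * (b ⬝ᵥ b / V)) := by
      rw [integral_gaussianShiftRatioPi_sq V hV]
      simp only [dotProduct, Pi.smul_apply, smul_eq_mul, ← mul_div_assoc, Finset.mul_sum]
      exact congrArg exp (congrArg (· / (V : ℝ)) (Finset.sum_congr rfl fun i _ => by ring))
    rw [← hfL, ← hL2]
    exact sq_integral_mul_le_of_integral_eq hf (memLp_two_gaussianShiftRatioPi V hV _) hmean
      (integral_gaussianShiftRatioPi V hV _)
  calc (V : ℝ) * k ^ 2 ≤ V * ((∫ w, f w ^ 2 ∂𝒩) * (b ⬝ᵥ b / V)) := by gcongr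
    _ = (b ⬝ᵥ b) * ∫ w, f w ^ 2 ∂𝒩 := by field_simp

theorem linearModel_cramerRao {κ : Type*} [Fintype κ] (hV : V ≠ 0) (H : Matrix ι κ ℝ)
    {est : (ι → ℝ) → κ → ℝ} {α₀ : κ → ℝ} (hest : MemLp (fun w => est (H *ᵥ α₀ + w)) 2 𝒩)
    (u : κ → ℝ) (hunb : ∀ t : ℝ, ∫ w, est (H *ᵥ (α₀ + t • u) + w) ∂𝒩 = α₀ + t • u)
    (x : κ → ℝ) :
    V * (x ⬝ᵥ u) ^ 2 ≤
      ((H *ᵥ u) ⬝ᵥ (H *ᵥ u)) * ∫ w, (x ⬝ᵥ (est (H *ᵥ α₀ + w) - α₀)) ^ 2 ∂𝒩 := by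
  have hf : MemLp (fun w => x ⬝ᵥ (est (H *ᵥ α₀ + w) - α₀)) 2 𝒩 :=
    memLp_finsetSum _ fun i _ => ((hest.eval i).sub (memLp_const (α₀ i))).const_mul (x i)
  refine pi_gaussianReal_cramerRao V hV hf (H *ᵥ u) _ fun t => ?_
  have hint := integrable_comp_add_of_memLp_two V hV hest (t • H *ᵥ u)
  have hshift : ∀ w, H *ᵥ α₀ + (w + t • H *ᵥ u) = H *ᵥ (α₀ + t • u) + w := fun w => by
    rw [mulVec_add, mulVec_smul]; abel
  simp_rw [hshift] at hint ⊢
  have hcentered : Integrable (fun w => est (H *ᵥ (α₀ + t • u) + w) - α₀) 𝒩 :=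
    hint.sub (integrable_const α₀)
  rw [integral_dotProduct hcentered, integral_sub hint (integrable_const α₀),
    hunb, integral_const]
  simp [dotProduct_smul]

theorem linearModel_cramerRao_of_dotProduct_self_eq {κ : Type*} [Fintype κ] (hV : V ≠ 0)
    (H : Matrix ι κ ℝ) {est : (ι → ℝ) → κ → ℝ} {α₀ u x : κ → ℝ}
    (hest : MemLp (fun w => est (H *ᵥ α₀ + w)) 2 𝒩)
    (hunb : ∀ t : ℝ, ∫ w, est (H *ᵥ (α₀ + t • u) + w) ∂𝒩 = α₀ + t • u)
    (hu : (H *ᵥ u) ⬝ᵥ (H *ᵥ u) = x ⬝ᵥ u) :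
    V * (x ⬝ᵥ u) ≤ ∫ w, (x ⬝ᵥ (est (H *ᵥ α₀ + w) - α₀)) ^ 2 ∂𝒩 := by
  have hcr := hu ▸ linearModel_cramerRao V hV H hest u hunb x
  have hq : 0 ≤ x ⬝ᵥ u := hu ▸ Finset.sum_nonneg fun i _ => mul_self_nonneg _
  rcases hq.eq_or_lt with hq0 | hqpos
  · rw [← hq0, mul_zero]
    exact integral_nonneg fun _ => sq_nonneg _
  · exact le_of_mul_le_mul_left (by linarith) hqpos

end GaussianShift

section Matrices

variable {R : Type*} [CommRing R] {m n κ : Type*} [Fintype m] [Fintype n] [Fintype κ]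

lemma posSemidef_sub_of_forall_dotProduct_mulVec_le {C M : Matrix κ κ ℝ} (hC : Cᵀ = C)
    (hM : Mᵀ = M) (h : ∀ x, x ⬝ᵥ M *ᵥ x ≤ x ⬝ᵥ C *ᵥ x) : (C - M).PosSemidef := by
  refine posSemidef_iff_dotProduct_mulVec.2 ⟨?_, fun x => ?_⟩
  · rw [IsHermitian, conjTranspose_eq_transpose_of_trivial, transpose_sub, hC, hM]
  · rw [star_trivial, sub_mulVec, dotProduct_sub, sub_nonneg]
    exact h x

lemma mulVec_dotProduct_mulVec_self (A : Matrix m κ R) (y : κ → R) :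
    (A *ᵥ y) ⬝ᵥ (A *ᵥ y) = y ⬝ᵥ (Aᵀ * A) *ᵥ y := by
  rw [← mulVec_mulVec, dotProduct_mulVec, mulVec_transpose, dotProduct_comm]

lemma dotProduct_self_mulVec_gramInv [DecidableEq n] (H : Matrix m κ R) (U : Matrix κ n R)
    (hG : IsUnit ((H * U)ᵀ * (H * U)).det) (x : κ → R) :
    (H *ᵥ (U * ((H * U)ᵀ * (H * U))⁻¹ * Uᵀ) *ᵥ x) ⬝ᵥ
        (H *ᵥ (U * ((H * U)ᵀ * (H * U))⁻¹ * Uᵀ) *ᵥ x) =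
      x ⬝ᵥ (U * ((H * U)ᵀ * (H * U))⁻¹ * Uᵀ) *ᵥ x := by
  set G := (H * U)ᵀ * (H * U)
  set β := G⁻¹ *ᵥ Uᵀ *ᵥ x
  have hu : (U * G⁻¹ * Uᵀ) *ᵥ x = U *ᵥ β := by simp only [β, mulVec_mulVec, Matrix.mul_assoc]
  rw [hu, mulVec_mulVec]
  calc ((H * U) *ᵥ β) ⬝ᵥ ((H * U) *ᵥ β) = β ⬝ᵥ G *ᵥ β := mulVec_dotProduct_mulVec_self _ _
    _ = β ⬝ᵥ Uᵀ *ᵥ x := by rw [mulVec_mulVec, mul_nonsing_inv _ hG, one_mulVec]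
    _ = x ⬝ᵥ U *ᵥ β := by rw [dotProduct_mulVec, vecMul_transpose, dotProduct_comm]

end Matrices

section Selection

variable {R : Type*} [Semiring R] {m n κ : Type*} [DecidableEq κ] {S : Finset κ}
  {U : Matrix κ S R}

lemma mul_eq_submatrix_of_selection [Fintype κ]
    (hU : ∀ i j, U i j = if i = (j : κ) then 1 else 0) (H : Matrix m κ R) :
    H * U = H.submatrix id (fun j : S => (j : κ)) := by
  ext k j
  simp [mul_apply, hU]

lemma support_mulVec_subset_of_selection [Fintype n]
    (hU : ∀ i j, U i j = if i = (j : κ) then 1 else 0) (B : Matrix S n R) (v : n → R) :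
    Function.support ((U * B) *ᵥ v) ⊆ S := fun i hi => by
  by_contra hiS
  have hne : ∀ k : S, i ≠ k := fun k h => hiS (h ▸ k.2)
  exact hi (by simp [mulVec, dotProduct, mul_apply, hU, hne])

end Selection

theorem sparse_crb_maximal_support_general
    {m p : ℕ}
    (σ : ℝ) (hσ : 0 < σ)
    (ν : Measure (Fin m → ℝ))
    (hν : ν = Measure.pi fun _ : Fin m => gaussianReal 0 ⟨σ ^ 2, sq_nonneg σ⟩)
    (H : Matrix (Fin m) (Fin p) ℝ)
    (S : Finset (Fin p))
    (G : Matrix S S ℝ)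
    (hGdef : G = (H.submatrix id (fun j : S => (j : Fin p)))ᵀ *
      H.submatrix id (fun j : S => (j : Fin p)))
    (hGinv : IsUnit G.det)
    (U : Matrix (Fin p) S ℝ)
    (hU : ∀ (i : Fin p) (j : S), U i j = if i = (j : Fin p) then 1 else 0)
    (est : (Fin m → ℝ) → Fin p → ℝ) (hmeas : Measurable est)
    (hunbiased : ∀ α : Fin p → ℝ, Function.support α ⊆ (S : Set (Fin p)) →
      ∫ w, est (H.mulVec α + w) ∂ν = α)
    (α₀ : Fin p → ℝ) (hα₀ : Function.support α₀ ⊆ (S : Set (Fin p)))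
    (hint : Integrable (fun w => ∑ i, (est (H.mulVec α₀ + w) i) ^ 2) ν)
    (C : Matrix (Fin p) (Fin p) ℝ)
    (hC : ∀ i j, C i j =
      ∫ w, (est (H.mulVec α₀ + w) i - α₀ i) * (est (H.mulVec α₀ + w) j - α₀ j) ∂ν) :
    (C - σ ^ 2 • (U * G⁻¹ * Uᵀ)).PosSemidef := by
  set V : ℝ≥0 := ⟨σ ^ 2, sq_nonneg σ⟩
  have hV : V ≠ 0 := fun h => hσ.ne' (pow_eq_zero_iff two_ne_zero |>.1 (congrArg NNReal.toReal h))
  rw [← mul_eq_submatrix_of_selection hU] at hGdef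
  subst hν hGdef
  obtain rfl : C = secondMomentMatrix _ fun w => est (H *ᵥ α₀ + w) - α₀ := Matrix.ext hC
  have hd : MemLp (fun w => est (H *ᵥ α₀ + w)) 2 (Measure.pi fun _ => gaussianReal 0 V) :=
    memLp_two_of_integrable_sum_sq (hmeas.comp (measurable_const_add _)).aestronglyMeasurable hint
  refine posSemidef_sub_of_forall_dotProduct_mulVec_le (secondMomentMatrix_transpose _ _)
    (by simp only [transpose_smul, transpose_mul, transpose_transpose, transpose_nonsing_inv,
      Matrix.mul_assoc]) fun x => ?_
  have hsupp : Function.support ((U * ((H * U)ᵀ * (H * U))⁻¹ * Uᵀ) *ᵥ x) ⊆ S := by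
    rw [Matrix.mul_assoc]
    exact support_mulVec_subset_of_selection hU _ x
  rw [smul_mulVec, dotProduct_smul, smul_eq_mul,
    dotProduct_secondMomentMatrix_mulVec (F := fun w => est (H *ᵥ α₀ + w) - α₀)
      (hd.sub (memLp_const α₀))]
  exact linearModel_cramerRao_of_dotProduct_self_eq V hV H hd
    (fun t => hunbiased _ ((Function.support_add _ _).trans (Set.union_subset hα₀
      ((Function.support_smul_subset_right _ _).trans hsupp))))
    (dotProduct_self_mulVec_gramInv H U hGinv x)

/-- Constrained Cramér–Rao bound for estimators that are unbiased on the
support subspace `{α : supp α ⊆ S}`: the covariance-type matrix `C` at `α₀` satisfies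
`C ⪰ σ² · U G⁻¹ Uᵀ`, where `G = H_Sᵀ H_S` and the columns of `U` are the standard basis
vectors indexed by `S`. -/
theorem sparse_crb_maximal_support
    {m p s : ℕ} (hs : 1 ≤ s)
    (σ : ℝ) (hσ : 0 < σ)
    (ν : Measure (Fin m → ℝ))
    (hν : ν = Measure.pi fun _ : Fin m => gaussianReal 0 ⟨σ ^ 2, sq_nonneg σ⟩)
    (H : Matrix (Fin m) (Fin p) ℝ)
    (S : Finset (Fin p)) (hScard : S.card = s)
    (G : Matrix S S ℝ)
    (hGdef : G = (H.submatrix id (fun j : S => (j : Fin p)))ᵀ *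
      H.submatrix id (fun j : S => (j : Fin p)))
    (hGinv : IsUnit G.det)
    (U : Matrix (Fin p) S ℝ)
    (hU : ∀ (i : Fin p) (j : S), U i j = if i = (j : Fin p) then 1 else 0)
    (est : (Fin m → ℝ) → Fin p → ℝ) (hmeas : Measurable est)
    (hunbiased : ∀ α : Fin p → ℝ, Function.support α ⊆ (S : Set (Fin p)) →
      ∫ w, est (H.mulVec α + w) ∂ν = α)
    (α₀ : Fin p → ℝ) (hα₀ : Function.support α₀ ⊆ (S : Set (Fin p)))
    (hint : Integrable (fun w => ∑ i, (est (H.mulVec α₀ + w) i) ^ 2) ν)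
    (C : Matrix (Fin p) (Fin p) ℝ)
    (hC : ∀ i j, C i j =
      ∫ w, (est (H.mulVec α₀ + w) i - α₀ i) * (est (H.mulVec α₀ + w) j - α₀ j) ∂ν) :
    (C - σ ^ 2 • (U * G⁻¹ * Uᵀ)).PosSemidef :=
  sparse_crb_maximal_support_general σ hσ ν hν H S G hGdef hGinv U hU est hmeas hunbiased α₀ hα₀
    hint C hC
end

section
/- Let H be an m × p real matrix whose null space is nontrivial, i.e., there exists v ≠ 0 with Hv = 0. Then there exists no measurable estimator α̂ : ℝ^m → ℝ^p, with α̂ integrable with respect to the shifted noise measure at each parameter, that is unbiased on any open ball: for every open ball B ⊆ ℝ^p, it is impossible that ∫ α̂(Hα + w) dν(w) = α holds for all α ∈ B. -/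
open MeasureTheory ProbabilityTheory Matrix

/-- If `H` has a nontrivial null space, then no integrable estimator can be
unbiased on any open ball of parameters. -/
theorem no_unbiased_estimator_on_ball
    {m p : ℕ}
    (σ : ℝ) (hσ : 0 < σ)
    (ν : Measure (Fin m → ℝ))
    (hν : ν = Measure.pi fun _ : Fin m => gaussianReal 0 ⟨σ ^ 2, sq_nonneg σ⟩)
    (H : Matrix (Fin m) (Fin p) ℝ)
    (v : Fin p → ℝ) (hv : v ≠ 0) (hvker : H.mulVec v = 0)
    (est : (Fin m → ℝ) → Fin p → ℝ) (hmeas : Measurable est)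
    (hint : ∀ α : Fin p → ℝ, Integrable (fun w => est (H.mulVec α + w)) ν)
    (c : Fin p → ℝ) (r : ℝ) (hr : 0 < r) :
    ¬ (∀ α ∈ Metric.ball c r, ∫ w, est (H.mulVec α + w) ∂ν = α) := by
  intro h
  have hvnorm : (0:ℝ) < ‖v‖ := norm_pos_iff.mpr hv
  set t : ℝ := r / (2 * ‖v‖) with ht
  have htpos : 0 < t := div_pos hr (by positivity)
  set α' : Fin p → ℝ := c + t • v with hα'
  have hmem : α' ∈ Metric.ball c r := by
    rw [Metric.mem_ball, dist_eq_norm]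
    have : α' - c = t • v := by simp [hα']
    rw [this, norm_smul, Real.norm_eq_abs, abs_of_pos htpos]
    rw [ht, div_mul_eq_mul_div, mul_comm, mul_div_assoc]
    calc ‖v‖ * (r / (2 * ‖v‖)) = r / 2 := by field_simp
    _ < r := by linarith
  have hc : c ∈ Metric.ball c r := Metric.mem_ball_self hr
  have hmul : H.mulVec α' = H.mulVec c := by
    rw [hα', Matrix.mulVec_add, Matrix.mulVec_smul, hvker]
    simp
  have h1 := h c hc
  have h2 := h α' hmem
  rw [hmul, h1] at h2
  have hz : t • v = 0 := by
    have h3 : c = c + t • v := h2.trans hα'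
    have := congrArg (fun x => x - c) h3
    simpa using this.symm
  exact hv ((smul_eq_zero.mp hz).resolve_left htpos.ne')
end

section
/- Let H be an m × p real matrix and let s ≥ 1 be an integer with 2s ≤ p. Then the following are equivalent: (i) for all α₁, α₂ ∈ ℝ^p with ‖α₁‖₀ ≤ s and ‖α₂‖₀ ≤ s, Hα₁ = Hα₂ implies α₁ = α₂; (ii) for every set T of column indices with |T| ≤ 2s, the columns of H indexed by T are linearly independent. (Condition (ii) is the statement spark(H) > 2s.) -/
open Matrix

/-- Split a `2s`-sparse vector as a difference of two `s`-sparse vectors. -/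
lemma sparse_split_aux {p s : ℕ} (β : Fin p → ℝ)
    (h : (Function.support β).ncard ≤ 2 * s) :
    ∃ α₁ α₂ : Fin p → ℝ, (Function.support α₁).ncard ≤ s ∧
      (Function.support α₂).ncard ≤ s ∧ α₁ - α₂ = β := by
  classical
  set F : Finset (Fin p) := Finset.univ.filter (fun j => β j ≠ 0) with hF
  have hFsupp : Function.support β = ↑F := by
    ext j; simp [hF, Function.support]
  have hFcard : F.card ≤ 2 * s := by
    rw [← Set.ncard_coe_finset, ← hFsupp]; exact h
  obtain ⟨S, hS, hScard⟩ := Finset.exists_subset_card_eq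
    (min_le_right s F.card)
  refine ⟨fun j => if j ∈ S then β j else 0,
          fun j => if j ∈ S then 0 else -β j, ?_, ?_, ?_⟩
  · have hsub : Function.support (fun j => if j ∈ S then β j else 0) ⊆ ↑S := by
      intro j hj
      simp only [Function.mem_support] at hj
      simp only [Finset.mem_coe]
      by_contra hn
      simp [hn] at hj
    calc (Function.support (fun j => if j ∈ S then β j else 0)).ncard
        ≤ (↑S : Set (Fin p)).ncard := Set.ncard_le_ncard hsub S.finite_toSet
      _ = S.card := Set.ncard_coe_finset S
      _ ≤ s := by omega
  · have hsub : Function.support (fun j => if j ∈ S then 0 else -β j) ⊆ ↑(F \ S) := by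
      intro j hj
      simp only [Function.mem_support] at hj
      simp only [Finset.mem_coe]
      by_cases hn : j ∈ S
      · simp [hn] at hj
      · simp only [hn, if_false, ne_eq, neg_eq_zero] at hj
        simp [hF, hn, hj]
    calc (Function.support (fun j => if j ∈ S then 0 else -β j)).ncard
        ≤ (↑(F \ S) : Set (Fin p)).ncard :=
          Set.ncard_le_ncard hsub (F \ S).finite_toSet
      _ = (F \ S).card := Set.ncard_coe_finset _
      _ ≤ s := by rw [Finset.card_sdiff_of_subset hS]; omega
  · funext j
    by_cases hn : j ∈ S <;> simp [hn]

/-- Identifiability of `s`-sparse vectors is equivalent to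
`spark(H) > 2s`, i.e. every collection of at most `2s` columns of `H` is
linearly independent. -/
theorem sparse_identifiability_iff_spark
    {m p s : ℕ} (hs : 1 ≤ s) (hsp : 2 * s ≤ p)
    (H : Matrix (Fin m) (Fin p) ℝ) :
    (∀ α₁ α₂ : Fin p → ℝ, (Function.support α₁).ncard ≤ s →
        (Function.support α₂).ncard ≤ s → H.mulVec α₁ = H.mulVec α₂ → α₁ = α₂) ↔
      (∀ T : Finset (Fin p), T.card ≤ 2 * s →
        LinearIndependent ℝ (fun j : T => fun i : Fin m => H i (j : Fin p))) := by
  classical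
  constructor
  · -- identifiability → spark > 2s
    intro hid T hT
    rw [Fintype.linearIndependent_iff]
    intro g hg
    set β : Fin p → ℝ := fun j => if h : j ∈ T then g ⟨j, h⟩ else 0 with hβ
    have hβsupp : Function.support β ⊆ ↑T := by
      intro j hj
      simp only [Function.mem_support, hβ] at hj
      simp only [Finset.mem_coe]
      by_contra hn
      simp [hn] at hj
    have hβncard : (Function.support β).ncard ≤ 2 * s := by
      calc (Function.support β).ncard ≤ (↑T : Set (Fin p)).ncard :=
            Set.ncard_le_ncard hβsupp T.finite_toSet
        _ = T.card := Set.ncard_coe_finset T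
        _ ≤ 2 * s := hT
    have hHβ : H.mulVec β = 0 := by
      funext i
      have hgi := congrFun hg i
      simp only [Finset.sum_apply, Pi.smul_apply, smul_eq_mul, Pi.zero_apply] at hgi
      simp only [Matrix.mulVec, dotProduct, Pi.zero_apply]
      calc ∑ j, H i j * β j = ∑ j ∈ T, H i j * β j := by
            refine (Finset.sum_subset T.subset_univ ?_).symm
            intro j _ hj
            simp [hβ, hj]
        _ = ∑ j : T, H i (↑j) * β ↑j := (Finset.sum_coe_sort T _).symm
        _ = ∑ j : T, g j * H i ↑j := by
            refine Finset.sum_congr rfl fun j _ => ?_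
            rw [mul_comm]
            congr 1
            simp [hβ]
        _ = 0 := hgi
    have hβ0 : β = 0 := by
      obtain ⟨α₁, α₂, h1, h2, h3⟩ := sparse_split_aux β hβncard
      have hmul : H.mulVec α₁ = H.mulVec α₂ := by
        have hsub : H.mulVec α₁ - H.mulVec α₂ = 0 := by
          rw [← Matrix.mulVec_sub, h3, hHβ]
        exact sub_eq_zero.mp hsub
      have heq := hid α₁ α₂ h1 h2 hmul
      rw [← h3, heq, sub_self]
    intro j
    have := congrFun hβ0 (↑j : Fin p)
    simpa [hβ, j.2] using this
  · -- spark > 2s → identifiability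
    intro hspark α₁ α₂ h1 h2 hmul
    set β : Fin p → ℝ := α₁ - α₂ with hβ
    set F : Finset (Fin p) := Finset.univ.filter (fun j => β j ≠ 0) with hF
    have hFsub : ∀ j ∈ F, β j ≠ 0 := by
      intro j hj; simpa [hF] using hj
    have hFcard : F.card ≤ 2 * s := by
      set F₁ : Finset (Fin p) := Finset.univ.filter (fun j => α₁ j ≠ 0) with hF₁
      set F₂ : Finset (Fin p) := Finset.univ.filter (fun j => α₂ j ≠ 0) with hF₂
      have hs1 : F₁.card ≤ s := by
        have : Function.support α₁ = ↑F₁ := by ext j; simp [hF₁, Function.support]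
        rw [← Set.ncard_coe_finset, ← this]; exact h1
      have hs2 : F₂.card ≤ s := by
        have : Function.support α₂ = ↑F₂ := by ext j; simp [hF₂, Function.support]
        rw [← Set.ncard_coe_finset, ← this]; exact h2
      have hsub : F ⊆ F₁ ∪ F₂ := by
        intro j hj
        simp only [hF, Finset.mem_filter, Finset.mem_univ, true_and] at hj
        simp only [Finset.mem_union, hF₁, hF₂, Finset.mem_filter, Finset.mem_univ,
          true_and]
        by_contra hn
        push_neg at hn
        apply hj
        simp [hβ, hn.1, hn.2]
      calc F.card ≤ (F₁ ∪ F₂).card := Finset.card_le_card hsub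
        _ ≤ F₁.card + F₂.card := Finset.card_union_le _ _
        _ ≤ 2 * s := by omega
    have hli := hspark F hFcard
    rw [Fintype.linearIndependent_iff] at hli
    have hHβ : H.mulVec β = 0 := by
      rw [hβ, Matrix.mulVec_sub, hmul, sub_self]
    have hzero : ∀ j : F, β ↑j = 0 := by
      apply hli (fun j : F => β ↑j)
      funext i
      simp only [Finset.sum_apply, Pi.smul_apply, smul_eq_mul, Pi.zero_apply]
      have := congrFun hHβ i
      simp only [Matrix.mulVec, dotProduct, Pi.zero_apply] at this
      calc ∑ j : F, β ↑j * H i ↑j = ∑ j ∈ F, β j * H i j := Finset.sum_coe_sort F (fun j => β j * H i j)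
        _ = ∑ j, β j * H i j := by
            refine Finset.sum_subset F.subset_univ ?_
            intro j _ hj
            have : β j = 0 := by
              by_contra hn
              exact hj (by simp [hF, hn])
            simp [this]
        _ = 0 := by
            rw [← this]
            exact Finset.sum_congr rfl fun j _ => mul_comm _ _
    have hβ0 : β = 0 := by
      funext j
      show β j = 0
      by_cases hj : j ∈ F
      · exact hzero ⟨j, hj⟩
      · by_contra hn
        exact hj (by simp [hF, hn])
    have := sub_eq_zero.mp (hβ ▸ hβ0)
    exact this
end

section
/- Let s ≥ 1, let T = {α ∈ ℝ^p : ‖α‖₀ ≤ s}, and let α ∈ T satisfy ‖α‖₀ = s. Then a vector v ∈ ℝ^p is a feasible direction of T at α if and only if supp(v) ⊆ supp(α). Consequently, the span of the feasible directions of T at α equals the coordinate subspace {u ∈ ℝ^p : supp(u) ⊆ supp(α)}. -/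
/-!
Moving along `v` from `α` never creates zeros on `supp α` for small steps, since each `α j + δ v j`
with `α j ≠ 0` stays nonzero near `δ = 0`. So for small `δ ≠ 0` the support of `α + δ v` is
`supp α ∪ supp v`, which has more than `s = ‖α‖₀` elements exactly when `supp v ⊄ supp α`.
The feasible directions therefore form the coordinate subspace on `supp α`, which is its own span.
-/

open Filter Function Topology

/-- `v` is a feasible direction of the set `T = {α : ‖α‖₀ ≤ s}` at `α`: there is `δ₀ > 0`
such that `α + δ v ∈ T` for all `|δ| < δ₀`. -/
def IsFeasibleDirection {p : ℕ} (s : ℕ) (α v : Fin p → ℝ) : Prop :=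
  ∃ δ₀ : ℝ, 0 < δ₀ ∧ ∀ δ : ℝ, |δ| < δ₀ → (Function.support (α + δ • v)).ncard ≤ s

section Support

variable {ι 𝕜 M : Type*}

theorem support_add_smul_subset [Zero 𝕜] [AddMonoid M] [SMulZeroClass 𝕜 M] {α v : ι → M}
    (hv : support v ⊆ support α) (δ : 𝕜) : support (α + δ • v) ⊆ support α :=
  (support_add α (δ • v)).trans <|
    Set.union_subset le_rfl ((support_const_smul_subset δ v).trans hv)

theorem eventually_support_subset_support_add_smul [Finite ι] [NontriviallyNormedField 𝕜]
    (α v : ι → 𝕜) : ∀ᶠ δ in 𝓝 (0 : 𝕜), support α ⊆ support (α + δ • v) := by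
  have hcoord : ∀ j, ∀ᶠ δ in 𝓝 (0 : 𝕜), α j ≠ 0 → α j + δ * v j ≠ 0 := fun j => by
    by_cases hj : α j = 0
    · exact Eventually.of_forall fun _ h => absurd hj h
    · have hcont : ContinuousAt (fun δ : 𝕜 => α j + δ * v j) 0 := by fun_prop
      exact (hcont.eventually_ne (by simpa using hj)).mono fun _ h _ => h
  exact (eventually_all.2 hcoord).mono fun δ h j hj => h j hj

theorem eventually_support_union_subset_support_add_smul [Finite ι] [NontriviallyNormedField 𝕜]
    (α v : ι → 𝕜) :
    ∀ᶠ δ in 𝓝[≠] (0 : 𝕜), support α ∪ support v ⊆ support (α + δ • v) := by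
  filter_upwards [nhdsWithin_le_nhds (eventually_support_subset_support_add_smul α v),
    self_mem_nhdsWithin] with δ hα hδ
  refine Set.union_subset hα fun j hj => ?_
  by_cases hαj : α j = 0
  · simpa [hαj, Set.mem_compl_singleton_iff.1 hδ] using hj
  · exact hα hαj

theorem coe_pi_compl_bot (R : Type*) [Semiring R] [AddCommMonoid M] [Module R M] (s : Set ι) :
    (Submodule.pi sᶜ (fun _ => ⊥) : Submodule R (ι → M)) = {u : ι → M | support u ⊆ s} := by
  ext u
  simp only [SetLike.mem_coe, Submodule.mem_pi, Set.mem_compl_iff, Submodule.mem_bot,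
    Set.mem_ofPred_eq, support_subset_iff']

end Support

theorem isFeasibleDirection_iff_eventually {p s : ℕ} (α v : Fin p → ℝ) :
    IsFeasibleDirection s α v ↔ ∀ᶠ δ in 𝓝 (0 : ℝ), (support (α + δ • v)).ncard ≤ s := by
  simp only [IsFeasibleDirection, Metric.eventually_nhds_iff, Real.dist_eq, sub_zero]

theorem isFeasibleDirection_iff_support_subset {p s : ℕ} {α : Fin p → ℝ}
    (hα : (support α).ncard = s) (v : Fin p → ℝ) :
    IsFeasibleDirection s α v ↔ support v ⊆ support α := by
  rw [isFeasibleDirection_iff_eventually]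
  constructor
  · intro hfeas
    obtain ⟨δ, hδ, hgrow⟩ := ((hfeas.filter_mono nhdsWithin_le_nhds).and
      (eventually_support_union_subset_support_add_smul α v)).exists
    have hle : (support α ∪ support v).ncard ≤ s :=
      (Set.ncard_le_ncard hgrow (Set.toFinite _)).trans hδ
    rw [← hα] at hle
    exact Set.union_eq_left.1
      (Set.eq_of_subset_of_ncard_le Set.subset_union_left hle (Set.toFinite _)).symm
  · intro hv
    exact Eventually.of_forall fun δ =>
      hα ▸ Set.ncard_le_ncard (support_add_smul_subset hv δ) (Set.toFinite _)

theorem feasible_directions_maximal_support_general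
    {p s : ℕ}
    (α : Fin p → ℝ) (hα : (Function.support α).ncard = s) :
    (∀ v : Fin p → ℝ,
      IsFeasibleDirection s α v ↔ Function.support v ⊆ Function.support α) ∧
    (Submodule.span ℝ {v : Fin p → ℝ | IsFeasibleDirection s α v} : Set (Fin p → ℝ)) =
      {u : Fin p → ℝ | Function.support u ⊆ Function.support α} := by
  have hfeas := isFeasibleDirection_iff_support_subset hα
  refine ⟨hfeas, ?_⟩
  have hset : {v | IsFeasibleDirection s α v} =
      (Submodule.pi (support α)ᶜ (fun _ => ⊥) : Submodule ℝ (Fin p → ℝ)) := by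
    rw [coe_pi_compl_bot]
    exact Set.ext hfeas
  rw [hset, Submodule.span_eq, coe_pi_compl_bot]

/-- At a point `α` of maximal support (`‖α‖₀ = s`), a vector `v` is a
feasible direction of `T = {α : ‖α‖₀ ≤ s}` iff `supp v ⊆ supp α`; consequently the span
of the feasible directions is the coordinate subspace `{u : supp u ⊆ supp α}`. -/
theorem feasible_directions_maximal_support
    {p s : ℕ} (hs : 1 ≤ s)
    (α : Fin p → ℝ) (hα : (Function.support α).ncard = s) :
    (∀ v : Fin p → ℝ,
      IsFeasibleDirection s α v ↔ Function.support v ⊆ Function.support α) ∧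
    (Submodule.span ℝ {v : Fin p → ℝ | IsFeasibleDirection s α v} : Set (Fin p → ℝ)) =
      {u : Fin p → ℝ | Function.support u ⊆ Function.support α} :=
  feasible_directions_maximal_support_general α hα
end

section
/- Let V₁, …, V_k be finitely many linear subspaces of a finite-dimensional real normed vector space, and let X = V₁ ∪ ⋯ ∪ V_k. Then X is locally balanced. -/
/-- A subset `X` of a real normed vector space is locally balanced if every `x ∈ X` has a
relatively open neighborhood `C ⊆ X` such that `x + λ (x' − x) ∈ C` for all `x' ∈ C` and
all `|λ| ≤ 1`. -/
def LocallyBalanced {E : Type*} [NormedAddCommGroup E] [NormedSpace ℝ E]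
    (X : Set E) : Prop :=
  ∀ x ∈ X, ∃ C : Set E, C ⊆ X ∧ (∃ V : Set E, IsOpen V ∧ C = V ∩ X) ∧ x ∈ C ∧
    ∀ x' ∈ C, ∀ l : ℝ, |l| ≤ 1 → x + l • (x' - x) ∈ C

/-- A finite union of linear subspaces of a finite-dimensional real normed
vector space is locally balanced. -/
theorem union_subspaces_locallyBalanced
    {E : Type*} [NormedAddCommGroup E] [NormedSpace ℝ E] [FiniteDimensional ℝ E]
    {k : ℕ} (V : Fin k → Submodule ℝ E) :
    LocallyBalanced (⋃ i, (V i : Set E)) := by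
  intro x hx
  classical
  set F : Set E := ⋃ j ∈ {j : Fin k | x ∉ V j}, (V j : Set E) with hF
  have hFclosed : IsClosed F := by
    apply Set.Finite.isClosed_biUnion (Set.toFinite _)
    intro j _
    exact (V j).closed_of_finiteDimensional
  have hxF : x ∉ F := by
    simp only [hF, Set.mem_iUnion, Set.mem_setOf_eq]
    rintro ⟨j, hj, hjx⟩
    exact hj hjx
  obtain ⟨ε, hε, hball⟩ : ∃ ε > 0, ∀ y ∈ Metric.ball x ε, y ∉ F := by
    by_cases hne : F.Nonempty
    · refine ⟨Metric.infDist x F, ?_, ?_⟩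
      · exact (hFclosed.notMem_iff_infDist_pos hne).mp hxF
      · intro y hy hyF
        have h1 : Metric.infDist x F ≤ dist x y := Metric.infDist_le_dist_of_mem hyF
        rw [Metric.mem_ball, dist_comm] at hy
        linarith
    · exact ⟨1, one_pos, fun y _ hyF => hne ⟨y, hyF⟩⟩
  refine ⟨Metric.ball x ε ∩ (⋃ i, (V i : Set E)), Set.inter_subset_right,
    ⟨Metric.ball x ε, Metric.isOpen_ball, rfl⟩, ⟨Metric.mem_ball_self hε, hx⟩, ?_⟩
  rintro x' ⟨hx'b, hx'X⟩ l hl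
  obtain ⟨i, hi⟩ := Set.mem_iUnion.mp hx'X
  have hxi : x ∈ V i := by
    by_contra h
    exact hball x' hx'b (Set.mem_biUnion (Set.mem_setOf_eq ▸ h) hi)
  constructor
  · rw [Metric.mem_ball, dist_eq_norm]
    have : x + l • (x' - x) - x = l • (x' - x) := by abel
    rw [this, norm_smul, Real.norm_eq_abs]
    have hxx : ‖x' - x‖ < ε := by
      rw [Metric.mem_ball, dist_eq_norm] at hx'b; exact hx'b
    calc |l| * ‖x' - x‖ ≤ 1 * ‖x' - x‖ :=
          mul_le_mul_of_nonneg_right hl (norm_nonneg _)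
      _ = ‖x' - x‖ := one_mul _
      _ < ε := hxx
  · exact Set.mem_iUnion.mpr ⟨i, (V i).add_mem hxi ((V i).smul_mem l ((V i).sub_mem hi hxi))⟩
end

section
/- For every integer s ≥ 1, the set T = {α ∈ ℝ^p : ‖α‖₀ ≤ s} of s-sparse vectors in ℝ^p is locally balanced. -/
/-- For every `s ≥ 1`, the set of `s`-sparse vectors in `ℝ^p` is locally
balanced. -/
theorem sparse_set_locallyBalanced {p s : ℕ} (hs : 1 ≤ s) :
    LocallyBalanced {α : Fin p → ℝ | (Function.support α).ncard ≤ s} := by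
  intro x hx
  set V : Set (Fin p → ℝ) := ⋂ i : Fin p, {y | x i ≠ 0 → |y i - x i| < |x i|} with hV
  have hVopen : IsOpen V := by
    apply isOpen_iInter_of_finite
    intro i
    by_cases h : x i = 0
    · simp [h]
    · have heq : {y : Fin p → ℝ | x i ≠ 0 → |y i - x i| < |x i|}
          = (fun y : Fin p → ℝ => y i) ⁻¹' Metric.ball (x i) |x i| := by
        ext y; simp [Real.dist_eq, h]
      rw [heq]
      exact (continuous_apply i).isOpen_preimage _ Metric.isOpen_ball
  refine ⟨V ∩ {α | (Function.support α).ncard ≤ s}, Set.inter_subset_right,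
    ⟨V, hVopen, rfl⟩, ⟨?_, hx⟩, ?_⟩
  · simp only [hV, Set.mem_iInter, Set.mem_setOf_eq]
    intro i hi
    simpa [abs_pos] using hi
  · rintro x' ⟨hx'V, hx'T⟩ l hl
    have hsupp : ∀ i, x i ≠ 0 → x' i ≠ 0 := by
      intro i hi h0
      have h1 := Set.mem_iInter.1 hx'V i hi
      rw [h0, zero_sub, abs_neg] at h1
      exact lt_irrefl _ h1
    constructor
    · simp only [hV, Set.mem_iInter, Set.mem_setOf_eq]
      intro i hi
      have h1 := Set.mem_iInter.1 hx'V i hi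
      have : (x + l • (x' - x)) i - x i = l * (x' i - x i) := by
        simp [Pi.add_apply, Pi.smul_apply, smul_eq_mul]
      rw [this, abs_mul]
      calc |l| * |x' i - x i| ≤ 1 * |x' i - x i| := by
            exact mul_le_mul_of_nonneg_right hl (abs_nonneg _)
        _ = |x' i - x i| := one_mul _
        _ < |x i| := h1
    · have hsub : Function.support (x + l • (x' - x)) ⊆ Function.support x' := by
        intro i hi
        simp only [Function.mem_support] at hi ⊢
        intro h0
        have hx0 : x i = 0 := by
          by_contra hxne
          exact hsupp i hxne h0
        apply hi
        simp [Pi.add_apply, Pi.smul_apply, smul_eq_mul, hx0, h0]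
      exact le_trans (Set.ncard_le_ncard hsub (Set.toFinite _)) hx'T
end

section
/- Let H be an m × p real matrix whose columns h_i all have unit Euclidean norm, and let μ ≥ 0 be a real number such that |h_iᵀ h_j| ≤ μ for all i ≠ j. Let S be a set of column indices with |S| = s and suppose sμ < 1. Then G = H_Sᵀ H_S is invertible and, for every σ > 0, s·σ²/(1 + sμ) ≤ σ² · trace(G⁻¹) ≤ s·σ²/(1 − sμ). -/
/-!
The hypotheses say that `G = H_Sᵀ H_S` is `1 + E` with `|E j k| ≤ μ`, so
`|xᵀ E x| ≤ μ (∑ |x j|)² ≤ s μ ‖x‖²` and `G ≥ (1 - sμ) • 1`; in particular `G` is invertible.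
Testing this bound on `x = G⁻¹ eᵢ`, for which `xᵀ G x = (G⁻¹)ᵢᵢ`, gives `(1 - sμ) (G⁻¹)ᵢᵢ ≤ 1`,
while Cauchy–Schwarz for the Gram form gives `Gᵢᵢ (G⁻¹)ᵢᵢ ≥ 1`, i.e. `(G⁻¹)ᵢᵢ ≥ 1`.
Summing over `S`, `s / (1 + sμ) ≤ s ≤ trace G⁻¹ ≤ s / (1 - sμ)`.
-/

open Matrix

section QuadraticForm

variable {n : Type*} [Fintype n]

theorem abs_dotProduct_mulVec_le {μ : ℝ} (hμ : 0 ≤ μ) (E : Matrix n n ℝ)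
    (hE : ∀ j k, |E j k| ≤ μ) (x : n → ℝ) :
    |x ⬝ᵥ E *ᵥ x| ≤ Fintype.card n * μ * (x ⬝ᵥ x) := by
  have hexpand : x ⬝ᵥ E *ᵥ x = ∑ j, ∑ k, x j * E j k * x k := by
    simp only [dotProduct, mulVec, Finset.mul_sum, mul_assoc]
  have hcs : (∑ j, |x j|) ^ 2 ≤ Fintype.card n * (x ⬝ᵥ x) := by
    simpa [dotProduct, sq_abs, sq] using
      sq_sum_le_card_mul_sum_sq (s := Finset.univ) (f := fun j => |x j|)
  calc |x ⬝ᵥ E *ᵥ x|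
      ≤ ∑ j, ∑ k, |x j| * μ * |x k| := by
        rw [hexpand]
        refine (Finset.abs_sum_le_sum_abs _ _).trans (Finset.sum_le_sum fun j _ => ?_)
        refine (Finset.abs_sum_le_sum_abs _ _).trans (Finset.sum_le_sum fun k _ => ?_)
        rw [abs_mul, abs_mul]
        gcongr
        exact hE j k
    _ = μ * (∑ j, |x j|) ^ 2 := by
        simp only [sq, Finset.sum_mul, Finset.mul_sum]
        exact Finset.sum_congr rfl fun j _ => Finset.sum_congr rfl fun k _ => by ring
    _ ≤ μ * (Fintype.card n * (x ⬝ᵥ x)) := mul_le_mul_of_nonneg_left hcs hμ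
    _ = Fintype.card n * μ * (x ⬝ᵥ x) := by ring

theorem one_sub_card_mul_le_dotProduct_mulVec [DecidableEq n] {μ : ℝ} (hμ : 0 ≤ μ)
    (G : Matrix n n ℝ) (hdiag : ∀ j, G j j = 1) (hoff : ∀ j k, j ≠ k → |G j k| ≤ μ)
    (x : n → ℝ) :
    (1 - Fintype.card n * μ) * (x ⬝ᵥ x) ≤ x ⬝ᵥ G *ᵥ x := by
  have hE : ∀ j k, |(G - 1) j k| ≤ μ := by
    intro j k
    rcases eq_or_ne j k with rfl | hjk
    · simpa [hdiag] using hμ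
    · simpa [one_apply_ne hjk] using hoff j k hjk
  have hsplit : x ⬝ᵥ G *ᵥ x = x ⬝ᵥ x + x ⬝ᵥ (G - 1) *ᵥ x := by
    rw [sub_mulVec, one_mulVec, dotProduct_sub]
    ring
  have := (abs_le.mp (abs_dotProduct_mulVec_le hμ (G - 1) hE x)).1
  linarith

theorem isUnit_det_of_le_dotProduct_mulVec [DecidableEq n] {c : ℝ} (hc : 0 < c)
    (G : Matrix n n ℝ) (hG : ∀ x, c * (x ⬝ᵥ x) ≤ x ⬝ᵥ G *ᵥ x) : IsUnit G.det := by
  refine isUnit_iff_ne_zero.mpr fun hdet => ?_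
  obtain ⟨x, hx, hGx⟩ := exists_mulVec_eq_zero_iff.mpr hdet
  have hxx : 0 ≤ x ⬝ᵥ x := Finset.sum_nonneg fun j _ => mul_self_nonneg (x j)
  have := hG x
  rw [hGx, dotProduct_zero] at this
  exact hx (dotProduct_self_eq_zero.mp (by nlinarith))

theorem sq_dotProduct_gram_le {m : Type*} [Fintype m] (A : Matrix m n ℝ) (x y : n → ℝ) :
    (x ⬝ᵥ (Aᵀ * A) *ᵥ y) ^ 2 ≤ (x ⬝ᵥ (Aᵀ * A) *ᵥ x) * (y ⬝ᵥ (Aᵀ * A) *ᵥ y) := by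
  have hgram : ∀ u v : n → ℝ, u ⬝ᵥ (Aᵀ * A) *ᵥ v = (A *ᵥ u) ⬝ᵥ (A *ᵥ v) := fun u v => by
    rw [← mulVec_mulVec, dotProduct_mulVec, vecMul_transpose]
  rw [hgram, hgram, hgram]
  simpa only [dotProduct, sq] using Finset.sum_mul_sq_le_sq_mul_sq Finset.univ (A *ᵥ x) (A *ᵥ y)

end QuadraticForm

section InverseDiagonal

variable {n : Type*} [Fintype n] [DecidableEq n]

theorem dotProduct_mulVec_inv_single {G : Matrix n n ℝ} (hG : IsUnit G.det) (i : n) :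
    (G⁻¹ *ᵥ Pi.single i 1) ⬝ᵥ G *ᵥ (G⁻¹ *ᵥ Pi.single i 1) = G⁻¹ i i := by
  rw [mulVec_mulVec, mul_nonsing_inv G hG, one_mulVec, dotProduct_single_one,
    mulVec_single_one, col_apply]

-- Cauchy–Schwarz for the form of `G = AᵀA`, applied to `eᵢ` and `G⁻¹ eᵢ`.
theorem one_le_gram_mul_inv_apply_self {m : Type*} [Fintype m] (A : Matrix m n ℝ)
    (hA : IsUnit (Aᵀ * A).det) (i : n) : 1 ≤ (Aᵀ * A) i i * (Aᵀ * A)⁻¹ i i := by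
  set G := Aᵀ * A
  have hGx : G *ᵥ (G⁻¹ *ᵥ Pi.single i 1) = Pi.single i 1 := by
    rw [mulVec_mulVec, mul_nonsing_inv G hA, one_mulVec]
  have hcs := sq_dotProduct_gram_le A (Pi.single i 1) (G⁻¹ *ᵥ Pi.single i 1)
  rw [dotProduct_mulVec_inv_single hA, hGx] at hcs
  simpa [G] using hcs

theorem mul_inv_apply_self_le_one {c : ℝ} (hc : 0 ≤ c) {G : Matrix n n ℝ} (hG : IsUnit G.det)
    (hlow : ∀ x, c * (x ⬝ᵥ x) ≤ x ⬝ᵥ G *ᵥ x) (i : n) : c * G⁻¹ i i ≤ 1 := by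
  set x := G⁻¹ *ᵥ Pi.single i 1
  have hxi : x i = G⁻¹ i i := by simp [x]
  have hsq : x i ^ 2 ≤ x ⬝ᵥ x := by
    simpa [dotProduct, sq] using
      Finset.single_le_sum (f := fun j => x j ^ 2) (fun j _ => sq_nonneg _) (Finset.mem_univ i)
  have := hlow x
  rw [dotProduct_mulVec_inv_single hG, ← hxi] at this
  rw [← hxi]
  nlinarith [mul_le_mul_of_nonneg_left hsq hc]

theorem card_le_trace_inv_gram {m : Type*} [Fintype m] (A : Matrix m n ℝ)
    (hA : IsUnit (Aᵀ * A).det) (hdiag : ∀ i, (Aᵀ * A) i i = 1) :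
    (Fintype.card n : ℝ) ≤ (Aᵀ * A)⁻¹.trace := by
  have hle : ∀ i, 1 ≤ (Aᵀ * A)⁻¹ i i := fun i => by
    simpa [hdiag i] using one_le_gram_mul_inv_apply_self A hA i
  simpa [trace] using Finset.sum_le_sum fun i (_ : i ∈ Finset.univ) => hle i

theorem mul_trace_inv_le_card {c : ℝ} (hc : 0 ≤ c) {G : Matrix n n ℝ} (hG : IsUnit G.det)
    (hlow : ∀ x, c * (x ⬝ᵥ x) ≤ x ⬝ᵥ G *ᵥ x) : c * G⁻¹.trace ≤ Fintype.card n := by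
  rw [trace, Finset.mul_sum]
  simpa [diag] using Finset.sum_le_sum fun i (_ : i ∈ Finset.univ) =>
    mul_inv_apply_self_le_one hc hG hlow i

end InverseDiagonal

/-- If the columns of `H` have unit norm and coherence at most `μ`, with
`|S| = s` and `sμ < 1`, then `G = H_Sᵀ H_S` is invertible and
`s σ²/(1 + sμ) ≤ σ² trace(G⁻¹) ≤ s σ²/(1 − sμ)` for every `σ > 0`. -/
theorem gram_trace_inverse_bounds
    {m p s : ℕ} (H : Matrix (Fin m) (Fin p) ℝ)
    (hnorm : ∀ j : Fin p, ∑ i, H i j ^ 2 = 1)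
    (μ : ℝ) (hμ : 0 ≤ μ)
    (hcoh : ∀ j k : Fin p, j ≠ k → |∑ i, H i j * H i k| ≤ μ)
    (S : Finset (Fin p)) (hScard : S.card = s)
    (hsμ : (s : ℝ) * μ < 1)
    (G : Matrix S S ℝ)
    (hGdef : G = (H.submatrix id (fun j : S => (j : Fin p)))ᵀ *
      H.submatrix id (fun j : S => (j : Fin p))) :
    IsUnit G.det ∧
      ∀ σ : ℝ, 0 < σ →
        (s : ℝ) * σ ^ 2 / (1 + (s : ℝ) * μ) ≤ σ ^ 2 * G⁻¹.trace ∧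
          σ ^ 2 * G⁻¹.trace ≤ (s : ℝ) * σ ^ 2 / (1 - (s : ℝ) * μ) := by
  have hcard : Fintype.card S = s := by rw [Fintype.card_coe, hScard]
  have hentry : ∀ j k : S, G j k = ∑ i, H i j * H i k := fun j k => by
    simp [hGdef, mul_apply]
  have hdiag : ∀ j, G j j = 1 := fun j => by simpa [hentry, sq] using hnorm j
  have hoff : ∀ j k, j ≠ k → |G j k| ≤ μ := fun j k hjk => by
    simpa [hentry] using hcoh j k (Subtype.coe_injective.ne hjk)
  have hlow : ∀ x, (1 - s * μ) * (x ⬝ᵥ x) ≤ x ⬝ᵥ G *ᵥ x := by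
    simpa [hcard] using one_sub_card_mul_le_dotProduct_mulVec hμ G hdiag hoff
  have hunit : IsUnit G.det := isUnit_det_of_le_dotProduct_mulVec (by linarith) G hlow
  have htr_ge : (s : ℝ) ≤ G⁻¹.trace := by
    subst hGdef
    simpa [hcard] using card_le_trace_inv_gram _ hunit hdiag
  have htr_le : (1 - s * μ) * G⁻¹.trace ≤ s := by
    simpa [hcard] using mul_trace_inv_le_card (by linarith) hunit hlow
  refine ⟨hunit, fun σ _ => ⟨?_, ?_⟩⟩
  · rw [div_le_iff₀ (by nlinarith)]
    nlinarith [mul_nonneg (mul_nonneg (Nat.cast_nonneg s) hμ) (sq_nonneg σ)]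
  · rw [le_div_iff₀ (by linarith)]
    nlinarith [sq_nonneg σ]
end
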